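/- arXiv:1512.08363 — 10 statements merged into one kernel-verified Lean document; each statement's English description precedes it below -/
import Mathlib

section
/- Let K be a bisequential compact Hausdorff space. Suppose a sequence (x_k) in K has x as a cluster point, and for each k the sequence (x_{k,p})_p has x_k as a cluster point. Then there exist an infinite set N ⊆ ℕ and infinite sets N_k ⊆ ℕ for each k ∈ N such that the family of sets ({x_{k,p} : p ∈ N_k})_{k ∈ N} converges to x, i.e., for every neighborhood W of x all but finitely many of these sets are contained in W. -/
open Filter Topology

/-- A sequence of sets `A n` converges to a point `x` if every neighborhood of `x`
contains `A n` for all sufficiently large `n`. -/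
def SetSeqTendsto {K : Type*} [TopologicalSpace K] (A : ℕ → Set K) (x : K) : Prop :=
  ∀ W ∈ 𝓝 x, ∃ n₀ : ℕ, ∀ n > n₀, A n ⊆ W

/-- A space is bisequential if every ultrafilter converging to a point `x` contains a
sequence of sets converging to `x`. -/
def Bisequential (K : Type*) [TopologicalSpace K] : Prop :=
  ∀ (U : Ultrafilter K) (x : K), (U : Filter K) ≤ 𝓝 x →
    ∃ A : ℕ → Set K, (∀ n, A n ∈ U) ∧ SetSeqTendsto A x

/-- In a bisequential compact Hausdorff space, if `(x_k)` clusters at `x` and for each `k`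
the sequence `(x_{k,p})_p` clusters at `x_k`, then one can choose an infinite set `N` and
infinite sets `N_k` such that the family of sets `{x_{k,p} : p ∈ N_k}`, `k ∈ N`, converges
to `x`: every neighborhood of `x` contains all but finitely many of these sets. -/
theorem bisequential_blocks (K : Type*) [TopologicalSpace K] [CompactSpace K] [T2Space K]
    (hbi : Bisequential K) (x : K) (xs : ℕ → K) (hx : MapClusterPt x atTop xs)
    (xkp : ℕ → ℕ → K) (hkp : ∀ k, MapClusterPt (xs k) atTop (xkp k)) :
    ∃ N : Set ℕ, N.Infinite ∧ ∃ Nk : ℕ → Set ℕ, (∀ k ∈ N, (Nk k).Infinite) ∧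
      ∀ W ∈ 𝓝 x, {k ∈ N | ¬ (xkp k '' Nk k ⊆ W)}.Finite := by
  classical
  obtain ⟨V, hVle, hVx⟩ := mapClusterPt_iff_ultrafilter.mp hx
  choose G hGle hGx using fun k => mapClusterPt_iff_ultrafilter.mp (hkp k)
  set U : Ultrafilter K := V.bind (fun k => (G k).map (xkp k)) with hUdef
  have memU : ∀ s : Set K, s ∈ U ↔ {k | xkp k ⁻¹' s ∈ G k} ∈ V := fun s => Filter.mem_bind'
  have hU : (U : Filter K) ≤ 𝓝 x := by
    intro W hW
    rw [Ultrafilter.mem_coe, memU]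
    have h1 : xs ⁻¹' interior W ∈ V := hVx (interior_mem_nhds.mpr hW)
    refine Filter.mem_of_superset h1 fun k hk => ?_
    exact (hGx k) (mem_nhds_iff.mpr ⟨interior W, interior_subset, isOpen_interior, hk⟩)
  obtain ⟨A, hAU, hA⟩ := hbi U x hU
  -- B j = set of k such that xkp k ⁻¹' A j ∈ G k
  set B : ℕ → Set ℕ := fun j => {k | xkp k ⁻¹' A j ∈ G k} with hBdef
  have hBV : ∀ j, B j ∈ V := fun j => (memU (A j)).mp (hAU j)
  have key : ∀ m n : ℕ, ∃ k, k > m ∧ k ∈ ⋂ j ∈ Set.Iic n, B j := by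
    intro m n
    have h1 : (⋂ j ∈ Set.Iic n, B j) ∈ V :=
      (Filter.biInter_mem (Set.finite_Iic n)).mpr fun j _ => hBV j
    have h2 : Set.Ioi m ∈ V := hVle (Ioi_mem_atTop m)
    obtain ⟨k, hk1, hk2⟩ := Ultrafilter.nonempty_of_mem (Filter.inter_mem h2 h1)
    exact ⟨k, hk1, hk2⟩
  choose g hg1 hg2 using key
  set f : ℕ → ℕ := fun n => Nat.rec (g 0 0) (fun n ih => g ih (n + 1)) n with hfdef
  have hfmono : StrictMono f := strictMono_nat_of_lt_succ fun n => hg1 (f n) (n + 1)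
  have hfB : ∀ n, f n ∈ ⋂ j ∈ Set.Iic n, B j := by
    intro n; cases n with
    | zero => exact hg2 0 0
    | succ n => exact hg2 (f n) (n + 1)
  -- C n : set in G (f n)
  set C : ℕ → Set ℕ := fun n => ⋂ j ∈ Set.Iic n, xkp (f n) ⁻¹' A j with hCdef
  have hCG : ∀ n, C n ∈ G (f n) := by
    intro n
    refine (Filter.biInter_mem (Set.finite_Iic n)).mpr fun j hj => ?_
    have := Set.mem_iInter₂.mp (hfB n) j hj
    exact this
  have hCinf : ∀ n, (C n).Infinite := by
    intro n
    by_contra hfin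
    rw [Set.not_infinite] at hfin
    have : (C n)ᶜ ∈ G (f n) := hGle (f n) (Nat.cofinite_eq_atTop ▸ hfin.compl_mem_cofinite)
    exact (Ultrafilter.compl_notMem_iff.mpr (hCG n)) this
  set N : Set ℕ := Set.range f with hNdef
  set Nk : ℕ → Set ℕ := fun k => if h : k ∈ N then C h.choose else Set.univ with hNkdef
  refine ⟨N, Set.infinite_range_of_injective hfmono.injective, Nk, ?_, ?_⟩
  · rintro k hk
    rw [hNkdef]; simp only [hk, dif_pos]
    exact hCinf _
  · intro W hW
    obtain ⟨n₀, hn₀⟩ := hA W hW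
    have hsub : {k ∈ N | ¬ (xkp k '' Nk k ⊆ W)} ⊆ f '' Set.Iio (n₀ + 1) := by
      rintro k ⟨hkN, hbad⟩
      obtain ⟨m, hm⟩ := id hkN
      by_contra hnot
      have hmge : n₀ + 1 ≤ m := by
        by_contra hlt
        exact hnot ⟨m, Nat.lt_of_not_le hlt, hm⟩
      apply hbad
      have hch : f hkN.choose = k := hkN.choose_spec
      have hceq : hkN.choose = m := hfmono.injective (hch.trans hm.symm)
      have : Nk k = C m := by rw [hNkdef]; simp only [hkN, dif_pos]; rw [hceq]
      rw [this]
      rintro y ⟨p, hp, rfl⟩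
      have hpA : xkp k p ∈ A (n₀ + 1) := by
        have := Set.mem_iInter₂.mp hp (n₀ + 1) hmge
        rwa [← hm]
      exact hn₀ (n₀ + 1) (Nat.lt_succ_self n₀) hpA
    exact Set.Finite.subset ((Set.finite_Iio _).image f) hsub
end

section
/- Let K and K' be bisequential compact Hausdorff spaces, D a dense subset of K, and φ : D → K' a function. Then either φ extends to a continuous function Φ : K → K', or there exist two sequences (d_n) and (d'_n) in D converging to the same point of K such that (φ(d_n)) and (φ(d'_n)) converge to two different points of K'. -/
open Filter Topology

private lemma mem_of_closed' {X : Type*} [TopologicalSpace X] {F : Filter X} [F.NeBot] {a : X}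
    {s : Set X} (h : F ≤ 𝓝 a) (hs : s ∈ F) (hc : IsClosed s) : a ∈ s := by
  have hcp : ClusterPt a (𝓟 s) := neBot_of_le (le_inf h (le_principal_iff.2 hs))
  have := mem_closure_iff_clusterPt.2 hcp
  rwa [hc.closure_eq] at this

/-- From an ultrafilter on an index type whose images under `f` and `g` converge,
extract a sequence whose images converge, assuming bisequentiality. -/
private lemma extract_seq {K K' : Type*} [TopologicalSpace K] [TopologicalSpace K']
    {α : Type*} (U : Ultrafilter α) (f : α → K) (g : α → K') {z : K} {y : K'}
    (hK : Bisequential K) (hK' : Bisequential K')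
    (hf : (U.map f : Filter K) ≤ 𝓝 z) (hg : (U.map g : Filter K') ≤ 𝓝 y) :
    ∃ d : ℕ → α, Tendsto (fun n => f (d n)) atTop (𝓝 z) ∧
      Tendsto (fun n => g (d n)) atTop (𝓝 y) := by
  obtain ⟨A, hA, hAz⟩ := hK (U.map f) z hf
  obtain ⟨B, hB, hBy⟩ := hK' (U.map g) y hg
  have hne : ∀ n : ℕ, ((f ⁻¹' A n) ∩ (g ⁻¹' B n)).Nonempty := by
    intro n
    have h1 : f ⁻¹' A n ∈ U := hA n
    have h2 : g ⁻¹' B n ∈ U := hB n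
    exact Ultrafilter.nonempty_of_mem (inter_mem h1 h2)
  choose d hd using hne
  refine ⟨d, ?_, ?_⟩
  · intro W hW
    obtain ⟨n₀, hn₀⟩ := hAz W hW
    rw [mem_map]
    filter_upwards [Filter.eventually_gt_atTop n₀] with n hn
    exact hn₀ n hn (hd n).1
  · intro W hW
    obtain ⟨n₀, hn₀⟩ := hBy W hW
    rw [mem_map]
    filter_upwards [Filter.eventually_gt_atTop n₀] with n hn
    exact hn₀ n hn (hd n).2

/-- Let `K`, `K'` be bisequential compact Hausdorff spaces, `D ⊆ K` dense and
`φ : D → K'`. Then either `φ` extends to a continuous `Φ : K → K'`, or there are two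
sequences in `D` converging to the same point of `K` whose `φ`-images converge to two
different points of `K'`. -/
theorem extend_or_split (K K' : Type*) [TopologicalSpace K] [CompactSpace K] [T2Space K]
    [TopologicalSpace K'] [CompactSpace K'] [T2Space K']
    (hK : Bisequential K) (hK' : Bisequential K')
    (D : Set K) (hD : Dense D) (φ : D → K') :
    (∃ Φ : K → K', Continuous Φ ∧ ∀ d : D, Φ d = φ d) ∨
    (∃ (d d' : ℕ → D) (z : K) (y y' : K'),
      Tendsto (fun n => (d n : K)) atTop (𝓝 z) ∧
      Tendsto (fun n => (d' n : K)) atTop (𝓝 z) ∧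
      Tendsto (fun n => φ (d n)) atTop (𝓝 y) ∧
      Tendsto (fun n => φ (d' n)) atTop (𝓝 y') ∧ y ≠ y') := by
  classical
  by_cases hS : ∃ (z : K) (y y' : K') (U U' : Ultrafilter D),
      (U.map Subtype.val : Filter K) ≤ 𝓝 z ∧ (U'.map Subtype.val : Filter K) ≤ 𝓝 z ∧
      (U.map φ : Filter K') ≤ 𝓝 y ∧ (U'.map φ : Filter K') ≤ 𝓝 y' ∧ y ≠ y'
  · obtain ⟨z, y, y', U, U', hUz, hU'z, hUy, hU'y, hyy'⟩ := hS
    obtain ⟨d, hd1, hd2⟩ := extract_seq U Subtype.val φ hK hK' hUz hUy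
    obtain ⟨d', hd'1, hd'2⟩ := extract_seq U' Subtype.val φ hK hK' hU'z hU'y
    exact Or.inr ⟨d, d', z, y, y', hd1, hd'1, hd2, hd'2, hyy'⟩
  · -- the non-split case: build the continuous extension
    push_neg at hS
    -- the canonical ultrafilter at each point
    have hNB : ∀ x : K, (comap (Subtype.val : D → K) (𝓝 x)).NeBot := fun x =>
      mem_closure_iff_comap_neBot.1 (hD x)
    let U : K → Ultrafilter D := fun x =>
      haveI := hNB x
      Ultrafilter.of (comap (Subtype.val : D → K) (𝓝 x))
    have hUle : ∀ x : K, (U x : Filter D) ≤ comap (Subtype.val : D → K) (𝓝 x) := fun x => by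
      haveI := hNB x
      exact Ultrafilter.of_le _
    have hUx : ∀ x : K, ((U x).map Subtype.val : Filter K) ≤ 𝓝 x := fun x =>
      le_trans (map_mono (hUle x)) map_comap_le
    -- the limit of φ along U x
    have hlim : ∀ x : K, ∃ y : K', ((U x).map φ : Filter K') ≤ 𝓝 y := by
      intro x
      obtain ⟨y, -, h⟩ := isCompact_univ.ultrafilter_le_nhds ((U x).map φ)
        (by simp [principal_univ])
      exact ⟨y, h⟩
    choose Φ hΦ using hlim
    -- uniqueness of limits of φ along ultrafilters converging to x
    have huniq : ∀ (x : K) (V : Ultrafilter D) (y : K'),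
        (V.map Subtype.val : Filter K) ≤ 𝓝 x → (V.map φ : Filter K') ≤ 𝓝 y → y = Φ x := by
      intro x V y hVx hVy
      exact hS x y (Φ x) V (U x) hVx (hUx x) hVy (hΦ x)
    refine Or.inl ⟨Φ, ?_, ?_⟩
    · -- continuity
      -- key claim: for every closed neighborhood C of Φ x, φ maps some neighborhood of x into C
      have key : ∀ (x : K) (C : Set K'), C ∈ 𝓝 (Φ x) →
          ∃ V ∈ 𝓝 x, ∀ e : D, (e : K) ∈ V → φ e ∈ C := by
        intro x C hC
        by_contra hcon
        push_neg at hcon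
        -- build a filter of points of D near x mapping outside C
        have hFne : (comap (Subtype.val : D → K) (𝓝 x) ⊓ 𝓟 (φ ⁻¹' Cᶜ)).NeBot := by
          rw [inf_principal_neBot_iff]
          intro S hS'
          obtain ⟨V, hV, hVS⟩ := mem_comap.1 hS'
          obtain ⟨e, heV, heC⟩ := hcon V hV
          exact ⟨e, hVS heV, heC⟩
        haveI := hFne
        set W : Ultrafilter D := Ultrafilter.of (comap (Subtype.val : D → K) (𝓝 x) ⊓ 𝓟 (φ ⁻¹' Cᶜ))
        have hWle : (W : Filter D) ≤ comap (Subtype.val : D → K) (𝓝 x) ⊓ 𝓟 (φ ⁻¹' Cᶜ) :=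
          Ultrafilter.of_le _
        have hWx : (W.map Subtype.val : Filter K) ≤ 𝓝 x :=
          le_trans (map_mono (le_trans hWle inf_le_left)) map_comap_le
        obtain ⟨y, -, hy⟩ := isCompact_univ.ultrafilter_le_nhds (W.map φ)
          (by simp [principal_univ])
        have hyΦ : y = Φ x := huniq x W y hWx hy
        -- but y lies in the closure of Cᶜ, away from the interior of C
        have hCc : Cᶜ ∈ W.map φ := by
          have : φ ⁻¹' Cᶜ ∈ W := hWle (le_principal_iff.1 inf_le_right : _)
        -- `φ ⁻¹' Cᶜ ∈ W` gives `Cᶜ ∈ W.map φ`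
          exact this
        have hycl : y ∈ closure Cᶜ := by
          have hcp : ClusterPt y (𝓟 Cᶜ) := neBot_of_le (le_inf hy (le_principal_iff.2 hCc))
          exact mem_closure_iff_clusterPt.2 hcp
        rw [closure_compl] at hycl
        exact hycl (hyΦ ▸ mem_interior_iff_mem_nhds.2 hC)
      rw [continuous_iff_continuousAt]
      intro x
      show Tendsto Φ (𝓝 x) (𝓝 (Φ x))
      rw [tendsto_def]
      intro W' hW'
      obtain ⟨C, hC, hCclosed, hCW'⟩ := exists_mem_nhds_isClosed_subset hW'
      obtain ⟨V, hV, hVC⟩ := key x C hC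
      obtain ⟨V', hV'V, hV'open, hxV'⟩ := mem_nhds_iff.1 hV
      filter_upwards [hV'open.mem_nhds hxV'] with v hvV'
      -- show Φ v ∈ C ⊆ W'
      have hmem : (Subtype.val : D → K) ⁻¹' V' ∈ U v :=
        hUle v (preimage_mem_comap (hV'open.mem_nhds hvV'))
      have hCmem : C ∈ (U v).map φ := by
        rw [Ultrafilter.mem_map]
        exact mem_of_superset hmem fun e he => hVC e (hV'V he)
      exact hCW' (mem_of_closed' (hΦ v) hCmem hCclosed)
    · -- extension property
      intro d
      have h1 : ((pure d : Ultrafilter D).map Subtype.val : Filter K) ≤ 𝓝 (d : K) := by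
        simp [pure_le_nhds]
      have h2 : ((pure d : Ultrafilter D).map φ : Filter K') ≤ 𝓝 (φ d) := by
        simp [pure_le_nhds]
      exact (huniq (d : K) (pure d) (φ d) h1 h2).symm
end

section
/- For a nonempty compact Hausdorff space K, the open degree of K equals 1 if and only if K is metrizable. -/
open Filter Topology

/-- `OdegLE K n` says the open degree of `K` is at most `n`: there is a countable family
`F` of open sets such that any `n+1` pairwise distinct points can be covered by members of
`F` with empty total intersection. -/
def OdegLE (K : Type*) [TopologicalSpace K] (n : ℕ) : Prop :=
  ∃ F : Set (Set K), F.Countable ∧ (∀ V ∈ F, IsOpen V) ∧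
    ∀ x : Fin (n + 1) → K, Function.Injective x →
      ∃ V : Fin (n + 1) → Set K, (∀ i, V i ∈ F ∧ x i ∈ V i) ∧ (⋂ i, V i) = ∅

/-- For a nonempty compact Hausdorff space `K`, the open degree of `K` equals `1`
(i.e. `odeg(K) ≤ 1` but not `odeg(K) ≤ 0`) if and only if `K` is metrizable. -/
theorem odeg_eq_one_iff_metrizable (K : Type*) [TopologicalSpace K] [CompactSpace K]
    [T2Space K] [Nonempty K] :
    (OdegLE K 1 ∧ ¬ OdegLE K 0) ↔ TopologicalSpace.MetrizableSpace K := by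
  have hnot : ¬ OdegLE K 0 := by
    rintro ⟨F, -, -, h⟩
    obtain ⟨k⟩ := ‹Nonempty K›
    obtain ⟨V, hV, hI⟩ := h (fun _ => k) (fun a b _ => Fin.ext (by omega))
    have : k ∈ ⋂ i, V i := Set.mem_iInter.2 fun i => (hV i).2
    rw [hI] at this
    exact this
  constructor
  · rintro ⟨⟨F, hFc, hFo, hF⟩, -⟩
    have hle : ‹TopologicalSpace K› ≤ TopologicalSpace.generateFrom F :=
      le_generateFrom hFo
    have ht2 : @T2Space K (TopologicalSpace.generateFrom F) := by
      refine @T2Space.mk K (TopologicalSpace.generateFrom F) (fun x y hxy => ?_)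
      obtain ⟨V, hV, hI⟩ := hF ![x, y] (by
        intro a b hab
        fin_cases a <;> fin_cases b <;> simp_all)
      refine ⟨V 0, V 1, TopologicalSpace.GenerateOpen.basic _ (hV 0).1,
        TopologicalSpace.GenerateOpen.basic _ (hV 1).1, (hV 0).2, (hV 1).2, ?_⟩
      rw [Set.disjoint_iff_inter_eq_empty, ← hI]
      ext z
      simp [Set.mem_iInter, Fin.forall_fin_two]
    have hcont : Continuous[_, TopologicalSpace.generateFrom F] (id : K → K) :=
      continuous_id_of_le hle
    have heq : TopologicalSpace.generateFrom F = ‹TopologicalSpace K› := by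
      refine le_antisymm (fun U hU => ?_) hle
      have hcU : IsCompact Uᶜ := (isClosed_compl_iff.mpr hU).isCompact
      have hcU' : @IsCompact K (TopologicalSpace.generateFrom F) Uᶜ := by
        have := @IsCompact.image K K _ (TopologicalSpace.generateFrom F) _ id hcU hcont
        simpa using this
      have hcl : @IsClosed K (TopologicalSpace.generateFrom F) Uᶜ :=
        @IsCompact.isClosed K (TopologicalSpace.generateFrom F) ht2 _ hcU'
      exact (@isClosed_compl_iff K (TopologicalSpace.generateFrom F) U).mp hcl
    haveI : SecondCountableTopology K := by
      rw [← heq]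
      exact TopologicalSpace.SecondCountableTopology.mk' hFc
    infer_instance
  · intro hm
    refine ⟨?_, hnot⟩
    haveI := hm
    letI : MetricSpace K := TopologicalSpace.metrizableSpaceMetric K
    haveI : SecondCountableTopology K := inferInstance
    refine ⟨TopologicalSpace.countableBasis K,
      TopologicalSpace.countable_countableBasis K,
      fun V hV => TopologicalSpace.isOpen_of_mem_countableBasis hV, ?_⟩
    intro x hx
    have hxy : x 0 ≠ x 1 := fun h => absurd (hx h) (by decide)
    obtain ⟨U, W, hU, hW, hxU, hxW, hUW⟩ := t2_separation hxy
    obtain ⟨b₁, hb₁, hxb₁, hb₁U⟩ :=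
      (TopologicalSpace.isBasis_countableBasis K).exists_subset_of_mem_open hxU hU
    obtain ⟨b₂, hb₂, hxb₂, hb₂W⟩ :=
      (TopologicalSpace.isBasis_countableBasis K).exists_subset_of_mem_open hxW hW
    refine ⟨![b₁, b₂], fun i => by fin_cases i <;> simp [hb₁, hb₂, hxb₁, hxb₂], ?_⟩
    ext z
    simp only [Set.mem_iInter, Set.mem_empty_iff_false, iff_false]
    intro hz
    exact hUW.le_bot ⟨hb₁U (by simpa using hz 0), hb₂W (by simpa using hz 1)⟩
end

section
/- Let K be a compact Hausdorff space with odeg(K) ≤ n. Then there exists a countable family F of open sets such that for every pairwise disjoint compact subsets L_0, ..., L_n of K there exist V_0, ..., V_n in F with L_i ⊆ V_i for each i and V_0 ∩ ... ∩ V_n = ∅. -/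
/-!
Close the witnessing family `F` under finite unions and intersections; this keeps it countable
and open. Points are then blown up to compact sets one coordinate at a time: if every choice of
a point `y` in the compact set `L κ` is separated, the `κ`-th separating sets for finitely many
`y` cover `L κ`, so their union at coordinate `κ`, together with the intersections of the
remaining ones at the other coordinates, separates `L`.
-/

open Filter Topology

open Set Function

section Lattice

variable {α : Type*}

lemma Set.Countable.setOf_finset_subset {s : Set α} (hs : s.Countable) :
    {t : Finset α | ↑t ⊆ s}.Countable := by
  simpa using (countable_ofPred_finite_subset hs).preimage Finset.coe_injective

lemma Set.Countable.supClosure [SemilatticeSup α] {s : Set α} (hs : s.Countable) :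
    (supClosure s).Countable := by
  refine (hs.setOf_finset_subset.biUnion fun t _ =>
    (show {a | ∃ ht : t.Nonempty, t.sup' ht id = a}.Subsingleton by
      rintro _ ⟨_, rfl⟩ _ ⟨_, rfl⟩; rfl).countable).mono ?_
  rintro _ ⟨t, ht, hts, rfl⟩
  exact mem_biUnion hts ⟨ht, rfl⟩

lemma Set.Countable.infClosure [SemilatticeInf α] {s : Set α} (hs : s.Countable) :
    (infClosure s).Countable := by
  refine (hs.setOf_finset_subset.biUnion fun t _ =>
    (show {a | ∃ ht : t.Nonempty, t.inf' ht id = a}.Subsingleton by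
      rintro _ ⟨_, rfl⟩ _ ⟨_, rfl⟩; rfl).countable).mono ?_
  rintro _ ⟨t, ht, hts, rfl⟩
  exact mem_biUnion hts ⟨ht, rfl⟩

lemma Set.Countable.latticeClosure [DistribLattice α] {s : Set α} (hs : s.Countable) :
    (latticeClosure s).Countable := by
  rw [← supClosure_infClosure]
  exact hs.infClosure.supClosure

lemma isOpen_of_mem_latticeClosure {X : Type*} [TopologicalSpace X] {F : Set (Set X)}
    (hF : ∀ V ∈ F, IsOpen V) : ∀ V ∈ latticeClosure F, IsOpen V :=
  latticeClosure_min (t := {V | IsOpen V}) hF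
    ⟨fun _ hU _ hV => IsOpen.union hU hV, fun _ hU _ hV => IsOpen.inter hU hV⟩

end Lattice

section Separation

variable {X ι : Type*}

def IsSeparatedBy (G : Set (Set X)) (L : ι → Set X) : Prop :=
  ∃ V : ι → Set X, (∀ i, V i ∈ G ∧ L i ⊆ V i) ∧ ⋂ i, V i = ∅

variable [TopologicalSpace X] {G : Set (Set X)} {L : ι → Set X}

lemma IsSeparatedBy.of_forall_update_singleton [DecidableEq ι] (hG : IsSublattice G)
    (hGo : ∀ V ∈ G, IsOpen V) {κ : ι} (hc : IsCompact (L κ)) (hne : (L κ).Nonempty)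
    (h : ∀ y ∈ L κ, IsSeparatedBy G (update L κ {y})) : IsSeparatedBy G L := by
  choose! W hW hWe using h
  have hyW : ∀ y ∈ L κ, y ∈ W y κ := fun y hy => (hW y hy κ).2 (by simp)
  obtain ⟨t, htL, hcover⟩ := hc.elim_nhds_subcover (fun y => W y κ)
    fun y hy => (hGo _ (hW y hy κ).1).mem_nhds (hyW y hy)
  have ht : t.Nonempty := by
    obtain ⟨y, hy⟩ := hne
    obtain ⟨z, hz, -⟩ := mem_iUnion₂.mp (hcover hy)
    exact ⟨z, hz⟩
  refine ⟨update (fun i => t.inf' ht (W · i)) κ (t.sup' ht (W · κ)), fun i => ?_, ?_⟩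
  · rcases eq_or_ne i κ with rfl | hi
    · rw [update_self]
      exact ⟨hG.supClosed.finsetSup'_mem ht fun y hy => (hW y (htL y hy) i).1,
        hcover.trans (iUnion₂_subset fun y hy => Finset.le_sup' (W · i) hy)⟩
    · rw [update_of_ne hi]
      refine ⟨hG.infClosed.finsetInf'_mem ht fun y hy => (hW y (htL y hy) i).1,
        Finset.le_inf' ht _ fun y hy => ?_⟩
      simpa [update_of_ne hi] using (hW y (htL y hy) i).2
  · refine eq_empty_of_forall_notMem fun z hz => ?_
    have hzκ := mem_iInter.mp hz κ
    rw [update_self, Finset.sup'_eq_sup, Finset.sup_set_eq_biUnion, mem_iUnion₂] at hzκ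
    obtain ⟨y, hy, hzy⟩ := hzκ
    suffices z ∈ ⋂ i, W y i by rwa [hWe y (htL y hy)] at this
    refine mem_iInter.mpr fun i => ?_
    rcases eq_or_ne i κ with rfl | hi
    · exact hzy
    · have hzi := mem_iInter.mp hz i
      rw [update_of_ne hi] at hzi
      exact Finset.inf'_le (W · i) hy hzi

lemma IsSeparatedBy.of_forall_mem_pi [Finite ι] (hG : IsSublattice G) (hGo : ∀ V ∈ G, IsOpen V)
    (hc : ∀ i, IsCompact (L i)) (hne : ∀ i, (L i).Nonempty)
    (h : ∀ x ∈ univ.pi L, IsSeparatedBy G fun i => {x i}) : IsSeparatedBy G L := by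
  classical
  have := Fintype.ofFinite ι
  suffices ∀ s : Finset ι, ∀ L : ι → Set X, (∀ i, IsCompact (L i)) → (∀ i, (L i).Nonempty) →
      (∀ i ∉ s, (L i).Subsingleton) → (∀ x ∈ univ.pi L, IsSeparatedBy G fun i => {x i}) →
      IsSeparatedBy G L from
    this Finset.univ L hc hne (by simp) h
  intro s
  induction s using Finset.induction_on with
  | empty =>
    intro L _ hne hsub h
    choose x hx using hne
    obtain rfl : L = fun i => {x i} :=
      funext fun i => (hsub i (Finset.notMem_empty i)).eq_singleton_of_mem (hx i)
    exact h x fun i _ => rfl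
  | insert κ s _ ih =>
    intro L hc hne hsub h
    refine .of_forall_update_singleton hG hGo (hc κ) (hne κ) fun y hy => ih _ ?_ ?_ ?_ ?_
    · exact (forall_update_iff L (p := fun _ K => IsCompact K)).2
        ⟨isCompact_singleton, fun i _ => hc i⟩
    · exact (forall_update_iff L (p := fun _ K => K.Nonempty)).2
        ⟨singleton_nonempty y, fun i _ => hne i⟩
    · exact (forall_update_iff L (p := fun i K => i ∉ s → K.Subsingleton)).2
        ⟨fun _ => subsingleton_singleton, fun i hiκ hi => hsub i (by simp [hi, hiκ])⟩
    · have hL : ∀ i, update L κ {y} i ⊆ L i := (forall_update_iff L (p := fun i K => K ⊆ L i)).2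
        ⟨singleton_subset_iff.2 hy, fun _ _ => subset_rfl⟩
      exact fun x hx => h x (pi_mono (fun i _ => hL i) hx)

end Separation

theorem odeg_separates_compacts_general (K : Type*) [TopologicalSpace K] (n : ℕ) (h : OdegLE K n) :
    ∃ F : Set (Set K), F.Countable ∧ (∀ V ∈ F, IsOpen V) ∧
      ∀ L : Fin (n + 1) → Set K, (∀ i, IsCompact (L i)) → (∀ i, (L i).Nonempty) →
        (Pairwise fun a b => Disjoint (L a) (L b)) →
        ∃ V : Fin (n + 1) → Set K, (∀ i, V i ∈ F ∧ L i ⊆ V i) ∧ (⋂ i, V i) = ∅ := by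
  obtain ⟨F, hFc, hFo, hF⟩ := h
  refine ⟨latticeClosure F, hFc.latticeClosure, isOpen_of_mem_latticeClosure hFo,
    fun L hc hne hdisj => ?_⟩
  refine IsSeparatedBy.of_forall_mem_pi isSublattice_latticeClosure
    (isOpen_of_mem_latticeClosure hFo) hc hne fun x hx => ?_
  have hx_inj : Injective x := fun i j hxij => by
    by_contra hij
    exact disjoint_left.mp (hdisj hij) (hx i trivial) (hxij ▸ hx j trivial)
  obtain ⟨V, hV, hVe⟩ := hF x hx_inj
  exact ⟨V, fun i => ⟨subset_latticeClosure (hV i).1, singleton_subset_iff.2 (hV i).2⟩, hVe⟩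

/-- If `odeg(K) ≤ n` then there is a countable family of open sets separating in the same
way any `n+1` pairwise disjoint (nonempty) compact subsets of `K`. -/
theorem odeg_separates_compacts (K : Type*) [TopologicalSpace K] [CompactSpace K]
    [T2Space K] (n : ℕ) (h : OdegLE K n) :
    ∃ F : Set (Set K), F.Countable ∧ (∀ V ∈ F, IsOpen V) ∧
      ∀ L : Fin (n + 1) → Set K, (∀ i, IsCompact (L i)) → (∀ i, (L i).Nonempty) →
        (Pairwise fun a b => Disjoint (L a) (L b)) →
        ∃ V : Fin (n + 1) → Set K, (∀ i, V i ∈ F ∧ L i ⊆ V i) ∧ (⋂ i, V i) = ∅ :=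
  odeg_separates_compacts_general K n h
end

section
/- If a compact Hausdorff space K admits a continuous surjection h : K → M onto a metrizable compact space with all fibers of cardinality at most n, then there exists a countable family F of open Fσ-subsets of K such that for every x_0, ..., x_n in K there exist V_0, ..., V_n in F with x_i ∈ V_i and V_0 ∩ ... ∩ V_n = ∅. Conversely, the existence of such a family F implies the existence of such a surjection h. -/
/-!
If `h : K → M` has fibers of size at most `n`, take the preimages of the members of a countable
basis of `M`, together with `K` itself: among `n + 1` distinct points two have different images,
and these are separated by disjoint basic open sets, which are `Fσ` because `M` is metrizable.

Conversely, an open `Fσ` set `V = ⋃ Cᵢ` in the normal space `K` is read off from countably many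
Urysohn functions, equal to `1` on `Cᵢ` and to `0` off `V`. Together they define a continuous map
into the metrizable cube `ℝ^(F × ℕ)` whose fibers lie inside or outside each member of `F`, so a
fiber with `n + 1` points would lie in some empty intersection `⋂ Vᵢ`; the map onto its (compact)
image is then the required `h`.
-/

/-- `K` is a premetric compactum of degree at most `n`: there is a continuous surjection
onto a compact metrizable space with all fibers of cardinality at most `n`. -/
def PremetricLE (K : Type u) [TopologicalSpace K] (n : ℕ) : Prop :=
  ∃ (M : Type u) (tM : TopologicalSpace M) (h : K → M),
    @CompactSpace M tM ∧ @TopologicalSpace.MetrizableSpace M tM ∧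
    @Continuous K M _ tM h ∧ Function.Surjective h ∧
    ∀ x : M, Cardinal.mk (h ⁻¹' {x}) ≤ (n : Cardinal)

open Set Function TopologicalSpace
open scoped Cardinal

theorem Cardinal.mk_le_natCast_iff_forall_injective {α : Type*} {s : Set α} {n : ℕ} :
    #s ≤ n ↔ ∀ x : Fin (n + 1) → α, Injective x → ∃ i, x i ∉ s := by
  have : (n : Cardinal) < #s ↔ Nonempty (Fin (n + 1) ↪ s) := by
    rw [← lift_mk_le', mk_fin, lift_natCast, nat_le_lift_iff, Nat.cast_succ,
      natCast_add_one_le_iff]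
  rw [← not_lt, this, not_nonempty_iff, ← not_iff_not]
  push Not
  constructor
  · exact fun ⟨e⟩ => ⟨_, Subtype.val_injective.comp e.injective, fun i => (e i).2⟩
  · exact fun ⟨x, hx, hs⟩ => ⟨⟨codRestrict x s hs, hx.codRestrict hs⟩⟩

theorem exists_iInter_eq_empty_of_disjoint {ι K : Type*} [DecidableEq ι] {F : Set (Set K)}
    (huniv : univ ∈ F) {x : ι → K} {i j : ι} (hij : i ≠ j) {A B : Set K} (hA : A ∈ F)
    (hB : B ∈ F) (hxA : x i ∈ A) (hxB : x j ∈ B) (hAB : Disjoint A B) :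
    ∃ V : ι → Set K, (∀ k, V k ∈ F ∧ x k ∈ V k) ∧ ⋂ k, V k = ∅ := by
  refine ⟨fun k => if k = i then A else if k = j then B else univ, fun k => ?_, ?_⟩
  · dsimp only
    split_ifs with hi hj
    exacts [⟨hA, hi ▸ hxA⟩, ⟨hB, hj ▸ hxB⟩, ⟨huniv, mem_univ _⟩]
  · refine eq_empty_of_subset_empty fun z hz => hAB.le_bot ⟨?_, ?_⟩
    · simpa using mem_iInter.1 hz i
    · simpa [hij.symm] using mem_iInter.1 hz j

theorem Continuous.exists_countable_separating_family {K M : Type*} [TopologicalSpace K]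
    [TopologicalSpace M] [MetrizableSpace M] [SecondCountableTopology M] {h : K → M}
    (hh : Continuous h) :
    ∃ F : Set (Set K), F.Countable ∧
      (∀ V ∈ F, IsOpen V ∧ ∃ C : ℕ → Set K, (∀ i, IsClosed (C i)) ∧ V = ⋃ i, C i) ∧
      univ ∈ F ∧
      ∀ x y, h x ≠ h y → ∃ A ∈ F, ∃ B ∈ F, x ∈ A ∧ y ∈ B ∧ Disjoint A B := by
  have hB := isBasis_countableBasis M
  refine ⟨(h ⁻¹' ·) '' insert univ (countableBasis M),
    ((countable_countableBasis M).insert _).image _, ?_, ⟨univ, mem_insert _ _, rfl⟩, ?_⟩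
  · rintro _ ⟨U, hU, rfl⟩
    have hUo : IsOpen U := hU.elim (· ▸ isOpen_univ) hB.isOpen
    let := metrizableSpaceMetric M
    obtain ⟨C, hC, -, hCU, -⟩ := hUo.exists_iUnion_isClosed
    exact ⟨hUo.preimage hh, _, fun i => (hC i).preimage hh, by rw [← preimage_iUnion, hCU]⟩
  · intro x y hxy
    obtain ⟨U, W, hU, hW, hxU, hyW, hUW⟩ := t2_separation hxy
    obtain ⟨U', hU', hxU', hU'U⟩ := hB.exists_subset_of_mem_open hxU hU
    obtain ⟨W', hW', hyW', hW'W⟩ := hB.exists_subset_of_mem_open hyW hW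
    exact ⟨_, mem_image_of_mem _ (mem_insert_of_mem _ hU'), _,
      mem_image_of_mem _ (mem_insert_of_mem _ hW'), hxU', hyW',
      (hUW.mono hU'U hW'W).preimage h⟩

theorem exists_iInter_eq_empty_of_mk_preimage_le {K M : Type*} {F : Set (Set K)} {n : ℕ}
    {h : K → M} (hfib : ∀ y, #(h ⁻¹' {y}) ≤ n) (huniv : univ ∈ F)
    (hF : ∀ x y, h x ≠ h y → ∃ A ∈ F, ∃ B ∈ F, x ∈ A ∧ y ∈ B ∧ Disjoint A B)
    (x : Fin (n + 1) → K) (hx : Injective x) :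
    ∃ V : Fin (n + 1) → Set K, (∀ i, V i ∈ F ∧ x i ∈ V i) ∧ ⋂ i, V i = ∅ := by
  obtain ⟨i, hi⟩ : ∃ i, h (x i) ≠ h (x 0) := by
    simpa using Cardinal.mk_le_natCast_iff_forall_injective.1 (hfib (h (x 0))) x hx
  obtain ⟨A, hA, B, hB, hxA, hxB, hAB⟩ := hF _ _ hi
  exact exists_iInter_eq_empty_of_disjoint huniv (fun h0 => hi (by rw [h0])) hA hB hxA hxB hAB

theorem IsOpen.exists_continuous_separating {K : Type*} [TopologicalSpace K] [NormalSpace K]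
    {V : Set K} (hV : IsOpen V) {C : ℕ → Set K} (hC : ∀ i, IsClosed (C i)) (hVC : V = ⋃ i, C i) :
    ∃ g : ℕ → C(K, ℝ), ∀ x y, (∀ i, g i x = g i y) → x ∈ V → y ∈ V := by
  have hg : ∀ i, ∃ g : C(K, ℝ), EqOn g 0 Vᶜ ∧ EqOn g 1 (C i) := fun i =>
    (exists_continuous_zero_one_of_isClosed hV.isClosed_compl (hC i)
      (disjoint_compl_left_iff_subset.2 (hVC ▸ subset_iUnion C i))).imp fun _ hg => ⟨hg.1, hg.2.1⟩
  choose g hg0 hg1 using hg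
  refine ⟨g, fun x y hxy hx => ?_⟩
  obtain ⟨i, hi⟩ := mem_iUnion.1 (hVC ▸ hx)
  by_contra hy
  have := (hxy i).symm.trans (hg1 i hi)
  rw [hg0 i hy] at this
  exact zero_ne_one this

theorem exists_continuous_pi_separating {K : Type*} [TopologicalSpace K] [NormalSpace K]
    {F : Set (Set K)}
    (hF : ∀ V ∈ F, IsOpen V ∧ ∃ C : ℕ → Set K, (∀ i, IsClosed (C i)) ∧ V = ⋃ i, C i) :
    ∃ φ : K → (F × ℕ → ℝ), Continuous φ ∧ ∀ x y, φ x = φ y → ∀ V ∈ F, x ∈ V → y ∈ V := by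
  have hg : ∀ V : F, ∃ g : ℕ → C(K, ℝ), ∀ x y, (∀ i, g i x = g i y) → x ∈ V.1 → y ∈ V.1 :=
    fun V => by
      obtain ⟨hVo, C, hC, hVC⟩ := hF V V.2
      exact hVo.exists_continuous_separating hC hVC
  choose g hg using hg
  exact ⟨fun x p => g p.1 p.2 x, continuous_pi fun p => (g p.1 p.2).continuous,
    fun x y hxy V hV => hg ⟨V, hV⟩ x y fun i => congrFun hxy (⟨V, hV⟩, i)⟩

theorem mk_preimage_singleton_le_of_iInter_eq_empty {K Y : Type*} {F : Set (Set K)} {n : ℕ}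
    {φ : K → Y} (hφ : ∀ x y, φ x = φ y → ∀ V ∈ F, x ∈ V → y ∈ V)
    (hsep : ∀ x : Fin (n + 1) → K, Injective x →
      ∃ V : Fin (n + 1) → Set K, (∀ i, V i ∈ F ∧ x i ∈ V i) ∧ ⋂ i, V i = ∅)
    (y : Y) : #(φ ⁻¹' {y}) ≤ n := by
  refine Cardinal.mk_le_natCast_iff_forall_injective.2 fun x hx => ?_
  by_contra! hy
  obtain ⟨V, hV, hV_empty⟩ := hsep x hx
  have : x 0 ∈ ⋂ i, V i := mem_iInter.2 fun i =>
    hφ (x i) (x 0) ((hy i).trans (hy 0).symm) (V i) (hV i).1 (hV i).2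
  simp [hV_empty] at this

theorem premetricLE_of_continuous {K X : Type u} [TopologicalSpace K] [CompactSpace K]
    [TopologicalSpace X] [MetrizableSpace X] {n : ℕ} {φ : K → X} (hφ : Continuous φ)
    (hfib : ∀ y, #(φ ⁻¹' {y}) ≤ n) : PremetricLE K n := by
  refine ⟨range φ, inferInstance, rangeFactorization φ,
    isCompact_iff_compactSpace.1 (isCompact_range hφ), inferInstance,
    hφ.subtype_mk _, rangeFactorization_surjective, fun y => ?_⟩
  have : rangeFactorization φ ⁻¹' {y} = φ ⁻¹' {y.1} := by
    ext x; simp [rangeFactorization, Subtype.ext_iff]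
  rw [this]
  exact hfib y

/-- A compact Hausdorff space `K` is a premetric compactum of degree at most `n` if and
only if there is a countable family `F` of open `Fσ` subsets of `K` such that any `n+1`
pairwise distinct points can be covered by members of `F` with empty total intersection. -/
theorem premetric_iff_open_Fsigma_family (K : Type u) [TopologicalSpace K] [CompactSpace K]
    [T2Space K] (n : ℕ) :
    PremetricLE K n ↔
      ∃ F : Set (Set K), F.Countable ∧
        (∀ V ∈ F, IsOpen V ∧ ∃ C : ℕ → Set K, (∀ i, IsClosed (C i)) ∧ V = ⋃ i, C i) ∧
        ∀ x : Fin (n + 1) → K, Function.Injective x →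
          ∃ V : Fin (n + 1) → Set K, (∀ i, V i ∈ F ∧ x i ∈ V i) ∧ (⋂ i, V i) = ∅ := by
  constructor
  · rintro ⟨M, tM, h, hM_compact, hM_metrizable, hh, -, hfib⟩
    obtain ⟨F, hF_countable, hF_open_Fσ, huniv, hF_sep⟩ := hh.exists_countable_separating_family
    exact ⟨F, hF_countable, hF_open_Fσ,
      exists_iInter_eq_empty_of_mk_preimage_le hfib huniv hF_sep⟩
  · rintro ⟨F, hF_countable, hF_open_Fσ, hsep⟩
    have := hF_countable.to_subtype
    obtain ⟨φ, hφ, hφF⟩ := exists_continuous_pi_separating hF_open_Fσ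
    exact premetricLE_of_continuous hφ (mk_preimage_singleton_le_of_iInter_eq_empty hφF hsep)
end

section
/- If K is a premetric compactum of degree at most n, then odeg(K) ≤ n. -/
open Filter Topology

universe u

/-- If `K` is a premetric compactum of degree at most `n`, then `odeg(K) ≤ n`. -/
theorem premetric_implies_odeg (K : Type u) [TopologicalSpace K] [CompactSpace K]
    [T2Space K] (n : ℕ) (h : PremetricLE K n) : OdegLE K n := by
  obtain ⟨M, tM, f, hcomp, hmetr, hcont, hsurj, hcard⟩ := h
  letI := tM
  haveI := hcomp
  haveI := hmetr
  letI : MetricSpace M := TopologicalSpace.metrizableSpaceMetric M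
  haveI : SecondCountableTopology M := inferInstance
  obtain ⟨B, hBc, hBnot, hBbasis⟩ := TopologicalSpace.exists_countable_basis M
  refine ⟨(fun U => f ⁻¹' U) '' B, hBc.image _, ?_, ?_⟩
  · rintro V ⟨U, hU, rfl⟩
    exact (hBbasis.isOpen hU).preimage hcont
  · intro x hx
    have hne : ∃ j k, f (x j) ≠ f (x k) := by
      by_contra hcon
      push_neg at hcon
      have hinj : Function.Injective
          (fun i : ULift.{u} (Fin (n + 1)) =>
            (⟨x i.down, by simp [hcon i.down 0]⟩ : f ⁻¹' {f (x 0)})) := by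
        intro a b hab
        exact ULift.ext a b (hx (congrArg Subtype.val hab))
      have h1 := (Cardinal.mk_le_of_injective hinj).trans (hcard (f (x 0)))
      simp only [Cardinal.mk_uLift, Cardinal.mk_fin, Cardinal.lift_natCast] at h1
      exact_mod_cast Nat.not_succ_le_self n (by exact_mod_cast h1)
    obtain ⟨j, k, hjk⟩ := hne
    obtain ⟨Uj, Uk, hUjo, hUko, hmj, hmk, hdisj⟩ := t2_separation hjk
    have hjk' : j ≠ k := fun e => hjk (by rw [e])
    have hbasic : ∀ i : Fin (n + 1), ∃ W, W ∈ B ∧ f (x i) ∈ W ∧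
        W ⊆ (if i = j then Uj else if i = k then Uk else Set.univ) := by
      intro i
      have hopen : IsOpen (if i = j then Uj else if i = k then Uk else Set.univ) := by
        split_ifs <;> simp [hUjo, hUko]
      have hmem : f (x i) ∈ (if i = j then Uj else if i = k then Uk else Set.univ) := by
        split_ifs with h1 h2
        · subst h1; exact hmj
        · subst h2; exact hmk
        · trivial
      obtain ⟨W, hWB, hWm, hWs⟩ := hBbasis.exists_subset_of_mem_open hmem hopen
      exact ⟨W, hWB, hWm, hWs⟩
    choose W hWB hWm hWs using hbasic
    refine ⟨fun i => f ⁻¹' (W i), fun i => ⟨⟨W i, hWB i, rfl⟩, hWm i⟩, ?_⟩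
    apply Set.eq_empty_of_subset_empty
    intro y hy
    simp only [Set.mem_iInter, Set.mem_preimage] at hy
    have hj : f y ∈ Uj := by have := hWs j (hy j); simpa using this
    have hk : f y ∈ Uk := by
      have := hWs k (hy k)
      simp [hjk'.symm] at this
      exact this
    exact hdisj.ne_of_mem hj hk rfl
end

section
/- Every infinite subset of the m-adic tree m^{<ω} contains an infinite (i,j)-comb for some pair (i,j) ∈ m × m. -/
/-!
König's lemma: the nodes having infinitely many extensions in `A` form a subtree in which
every node has a child, so it contains a branch `x`. Choose `a n ∈ A` extending `x|n`; its
meet with `x` then has length at least `n`. By pigeonhole infinitely many `a n` share the same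
incidence pair with `x`, and among those a subsequence has strictly increasing meet lengths.
-/

open Filter Topology

/-- `s` is an initial segment of the branch `x ∈ m^ω`. -/
def PrefixF {m : ℕ} (s : List (Fin m)) (x : ℕ → Fin m) : Prop :=
  ∀ k, (h : k < s.length) → s.get ⟨k, h⟩ = x k

/-- `IncFB x s (i, j)` is the incidence `inc(x, s) = (i, j)` of a branch `x ∈ m^ω` with a
node `s ∈ m^{<ω}`: either `s⌢i ≤ x` (and then `j = i`), or the meet `r = x ∧ s` is a
proper initial segment of both, with `r⌢i ≤ x` and `r⌢j ≤ s`. -/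
def IncFB {m : ℕ} (x : ℕ → Fin m) (s : List (Fin m)) (p : Fin m × Fin m) : Prop :=
  (p.2 = p.1 ∧ PrefixF (s ++ [p.1]) x) ∨
  (p.1 ≠ p.2 ∧ ∃ r : List (Fin m), PrefixF (r ++ [p.1]) x ∧ (r ++ [p.2]) <+: s)

/-- `r` is the meet `s ∧ x`: the longest common initial segment of `s` and the branch
`x`. -/
def IsMeet {m : ℕ} (x : ℕ → Fin m) (s : List (Fin m)) (r : List (Fin m)) : Prop :=
  PrefixF r x ∧ r <+: s ∧ ¬ ((r ++ [x r.length]) <+: s)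

section Branch

variable {α : Type*}

theorem exists_branch_of_forall_exists_child (T : List α → Prop) (h0 : T [])
    (hstep : ∀ t, T t → ∃ a, T (t ++ [a])) :
    ∃ x : ℕ → α, ∀ n, T ((List.range n).map x) := by
  choose next hnext using hstep
  let node : ℕ → {t // T t} := fun n =>
    Nat.rec ⟨[], h0⟩ (fun _ t => ⟨t.1 ++ [next t.1 t.2], hnext t.1 t.2⟩) n
  refine ⟨fun n => next (node n).1 (node n).2, fun n => ?_⟩
  have hnode : (List.range n).map (fun n => next (node n).1 (node n).2) = (node n).1 := by
    induction n with
    | zero => rfl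
    | succ n ih => rw [List.range_succ, List.map_append, ih]; rfl
  exact hnode ▸ (node n).2

theorem exists_child_infinite_extensions [Finite α] {S : Set (List α)} {t : List α}
    (hS : {a ∈ S | t <+: a}.Infinite) : ∃ i, {a ∈ S | t ++ [i] <+: a}.Infinite := by
  by_contra! h
  refine hS (((Set.finite_singleton t).union (Set.finite_iUnion h)).subset ?_)
  rintro a ⟨ha, l, rfl⟩
  cases l with
  | nil => simp
  | cons i l => exact Or.inr (Set.mem_iUnion.2 ⟨i, ha, l, by simp⟩)

end Branch

section Meet

variable {m : ℕ} {x : ℕ → Fin m} {a r t : List (Fin m)}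

theorem prefixF_cons {b : Fin m} {s : List (Fin m)} :
    PrefixF (b :: s) x ↔ b = x 0 ∧ PrefixF s (fun n => x (n + 1)) := by
  constructor
  · intro h
    exact ⟨h 0 (by simp), fun k hk => h (k + 1) (by simpa using hk)⟩
  · rintro ⟨h0, h⟩ (_ | k) hk
    · exact h0
    · exact h k (by simpa using hk)

theorem prefixF_map_range (x : ℕ → Fin m) (n : ℕ) : PrefixF ((List.range n).map x) x := by
  simp [PrefixF]

theorem IsMeet.cons (h : IsMeet (fun n => x (n + 1)) a r) : IsMeet x (x 0 :: a) (x 0 :: r) :=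
  ⟨prefixF_cons.2 ⟨rfl, h.1⟩, List.cons_prefix_cons.2 ⟨rfl, h.2.1⟩, by
    simpa [List.cons_prefix_cons] using h.2.2⟩

theorem IncFB.cons {p : Fin m × Fin m} (h : IncFB (fun n => x (n + 1)) a p) :
    IncFB x (x 0 :: a) p := by
  rcases h with ⟨hp, hx⟩ | ⟨hp, r, hx, hr⟩
  · exact Or.inl ⟨hp, prefixF_cons.2 ⟨rfl, hx⟩⟩
  · exact Or.inr ⟨hp, x 0 :: r, prefixF_cons.2 ⟨rfl, hx⟩, List.cons_prefix_cons.2 ⟨rfl, hr⟩⟩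

theorem exists_isMeet_incFB (x : ℕ → Fin m) (a : List (Fin m)) :
    ∃ r p, IsMeet x a r ∧ IncFB x a p := by
  induction a generalizing x with
  | nil => exact ⟨[], (x 0, x 0), ⟨fun _ h => absurd h (by simp), List.nil_prefix, by simp⟩,
      Or.inl ⟨rfl, by simp [PrefixF]⟩⟩
  | cons b a ih =>
    by_cases hb : b = x 0
    · obtain ⟨r, p, hr, hp⟩ := ih (fun n => x (n + 1))
      exact hb ▸ ⟨x 0 :: r, p, hr.cons, hp.cons⟩
    · refine ⟨[], (x 0, b), ⟨fun _ h => absurd h (by simp), List.nil_prefix, ?_⟩,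
        Or.inr ⟨Ne.symm hb, [], by simp [PrefixF], by simp⟩⟩
      simpa [List.cons_prefix_cons] using Ne.symm hb

theorem IsMeet.length_le (h : IsMeet x a r) (ht : t <+: a) (htx : PrefixF t x) :
    t.length ≤ r.length := by
  by_contra! hlt
  -- otherwise `t`, and hence `a`, would extend `r ⌢ x |r|`
  obtain hrt : r <+: t := List.prefix_of_prefix_length_le h.2.1 ht hlt.le
  apply h.2.2
  have : r ++ [x r.length] = t.take (r.length + 1) := by
    rw [← List.take_concat_get' t r.length hlt, ← List.prefix_iff_eq_take.1 hrt]
    simpa [PrefixF] using (htx r.length hlt).symm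
  exact this ▸ (List.take_prefix _ t).trans ht

theorem IsMeet.length_eq {r' : List (Fin m)} (h : IsMeet x a r) (h' : IsMeet x a r') :
    r.length = r'.length :=
  le_antisymm (h'.length_le h.2.1 h.1) (h.length_le h'.2.1 h'.1)

end Meet

/-- Every infinite subset `A` of the `m`-adic tree `m^{<ω}` contains an infinite
`(i,j)`-comb for some pair `(i,j) ∈ m × m`: an infinite sequence of distinct nodes of `A`
whose meets with some branch `x` form a strictly increasing chain (so their lengths tend
to infinity) and whose incidence with `x` is always `(i,j)`. -/
theorem infinite_subset_contains_comb (m : ℕ) (A : Set (List (Fin m))) (hA : A.Infinite) :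
    ∃ (i j : Fin m) (s : ℕ → List (Fin m)) (r : ℕ → List (Fin m)) (x : ℕ → Fin m),
      Function.Injective s ∧ (∀ n, s n ∈ A) ∧
      StrictMono (fun n => (r n).length) ∧
      (∀ n, IsMeet x (s n) (r n)) ∧
      (∀ n, IncFB x (s n) (i, j)) := by
  obtain ⟨x, hx⟩ := exists_branch_of_forall_exists_child (fun t => {a ∈ A | t <+: a}.Infinite)
    (by simpa using hA) (fun t ht => exists_child_infinite_extensions ht)
  choose a haA ha using fun n => (hx n).nonempty
  choose r p hr hp using fun n => exists_isMeet_incFB x (a n)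
  have hr_ge (n : ℕ) : n ≤ (r n).length := by
    simpa using (hr n).length_le (ha n) (prefixF_map_range x n)
  obtain ⟨q, hq⟩ := Finite.exists_infinite_fiber p
  obtain ⟨ψ, hψ, hψq⟩ := extraction_of_frequently_atTop
    (Nat.frequently_atTop_iff_infinite.2 (Set.infinite_coe_iff.1 hq))
  obtain ⟨φ, -, hrφ⟩ := strictMono_subseq_of_tendsto_atTop
    (u := fun k => (r (ψ k)).length)
    (tendsto_atTop_mono (fun k => (hψ.id_le k).trans (hr_ge _)) tendsto_id)
  refine ⟨q.1, q.2, a ∘ ψ ∘ φ, r ∘ ψ ∘ φ, x, fun k l hkl => hrφ.injective ?_,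
    fun k => haA _, hrφ, fun k => hr _, fun k => (hψq (φ k)) ▸ hp _⟩
  have hl := hr (ψ (φ l))
  rw [← show a (ψ (φ k)) = a (ψ (φ l)) from hkl] at hl
  exact (hr _).length_eq hl
end

section
/- Fix i, j ∈ m with i = j ∈ P for some P ∈ 𝔔, and let {s_0, s_1, ...} ⊆ m^{<ω} be an (i,i)-sequence over x ∈ m^ω. Then the functions g_{s_k} converge pointwise to the indicator function of the singleton {(x,P)} on X_𝔔. If instead i ≠ j, or i = j does not belong to any member of 𝔔, and {s_k} is an (i,j)-sequence over x, then g_{s_k} converges pointwise to the zero function. -/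
/-!
Evaluate `g_{s_k}` at each point of `X_𝔔`. At a node `t` it is eventually `0`, because
`|s_k| → ∞`. At `(y, P)` with `y ≠ x` it is eventually `0`, because `s_k` eventually agrees
with `x` past the first place where `y` and `x` differ. At `(x, P)` the incidence fixes the
value for every `k`: if `i = j` then `s_k⌢i ≤ x`, so `g_{s_k}(x, P) = 1` iff `i ∈ P`, i.e.
(the members of `𝔔` being disjoint) iff `P` is the member containing `i`; if `i ≠ j` then
`s_k` is not an initial segment of `x`, so `g_{s_k}(x, P) = 0`.
-/

open Filter Topology

/-- The underlying Polish set `X_𝔔 = m^{<ω} ∪ (m^ω × 𝔔)`. -/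
def XQ (m : ℕ) (Q : Set (Set (Fin m))) : Type :=
  List (Fin m) ⊕ ((ℕ → Fin m) × ↥Q)

open Classical in
/-- The function `g_s : X_𝔔 → {0,1}`: `g_s(t) = 1` iff `t = s`, and `g_s(y,P) = 1` iff
`s⌢ξ` is an initial segment of `y` for some `ξ ∈ P`. -/
noncomputable def gfun (m : ℕ) (Q : Set (Set (Fin m))) (s : List (Fin m)) :
    XQ m Q → Bool := fun z =>
  match z with
  | .inl t => decide (t = s)
  | .inr yP => if ∃ ξ ∈ (yP.2 : Set (Fin m)), PrefixF (s ++ [ξ]) yP.1 then true else false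

open Classical in
/-- The indicator function of the singleton `{(x,P)} ⊆ X_𝔔`. -/
noncomputable def gind (m : ℕ) (Q : Set (Set (Fin m))) (x : ℕ → Fin m) (P : ↥Q) :
    XQ m Q → Bool := fun z => if z = Sum.inr (x, P) then true else false

/-- The zero function on `X_𝔔`. -/
def gzero (m : ℕ) (Q : Set (Set (Fin m))) : XQ m Q → Bool := fun _ => false

/-- `K_∞(𝔔)`: the pointwise closure of `{g_s : s ∈ m^{<ω}}` in `{0,1}^{X_𝔔}`. -/
def Kinf (m : ℕ) (Q : Set (Set (Fin m))) : Set (XQ m Q → Bool) :=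
  closure (Set.range (gfun m Q))

/-- The meet `s ∧ x` has length at least `N`. -/
def MeetLarge {m : ℕ} (x : ℕ → Fin m) (s : List (Fin m)) (N : ℕ) : Prop :=
  ∃ r : List (Fin m), N ≤ r.length ∧ PrefixF r x ∧ r <+: s

variable {m : ℕ} {Q : Set (Set (Fin m))}

namespace PrefixF

theorem of_isPrefix {r s : List (Fin m)} {y : ℕ → Fin m} (hrs : r <+: s) (hs : PrefixF s y) :
    PrefixF r y := fun k hk => by
  have hk' : k < s.length := lt_of_lt_of_le hk hrs.length_le
  simpa [hrs.getElem hk] using hs k hk'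

theorem apply_length {s : List (Fin m)} {ξ : Fin m} {y : ℕ → Fin m}
    (h : PrefixF (s ++ [ξ]) y) : y s.length = ξ := by
  simpa using (h s.length (by simp)).symm

end PrefixF

theorem MeetLarge.le_length {x : ℕ → Fin m} {s : List (Fin m)} {N : ℕ}
    (h : MeetLarge x s N) : N ≤ s.length :=
  let ⟨_, hN, _, hrs⟩ := h
  hN.trans hrs.length_le

theorem MeetLarge.not_prefixF {x y : ℕ → Fin m} {s : List (Fin m)} {n : ℕ}
    (h : MeetLarge x s (n + 1)) (hyx : y n ≠ x n) : ¬ PrefixF s y := by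
  obtain ⟨r, hn, hrx, hrs⟩ := h
  intro hsy
  have hn' : n < r.length := hn
  exact hyx ((hsy.of_isPrefix hrs n hn').symm.trans (hrx n hn'))

theorem IncFB.prefixF_append {x : ℕ → Fin m} {s : List (Fin m)} {i : Fin m}
    (h : IncFB x s (i, i)) : PrefixF (s ++ [i]) x := by
  rcases h with ⟨-, h⟩ | ⟨hii, -⟩
  · exact h
  · exact absurd rfl hii

theorem IncFB.not_prefixF {x : ℕ → Fin m} {s : List (Fin m)} {i j : Fin m}
    (h : IncFB x s (i, j)) (hij : i ≠ j) : ¬ PrefixF s x := by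
  rcases h with ⟨hji, -⟩ | ⟨-, r, hri, hrj⟩
  · exact absurd hji.symm hij
  · exact fun hs => hij (hri.apply_length.symm.trans (hs.of_isPrefix hrj).apply_length)

theorem gfun_inl_eq_false {s t : List (Fin m)} (h : t ≠ s) : gfun m Q s (.inl t) = false := by
  simpa [gfun] using h

theorem gfun_inr_eq_false_of_not_prefixF {s : List (Fin m)} {y : ℕ → Fin m} {P : Q}
    (hs : ¬ PrefixF s y) : gfun m Q s (.inr (y, P)) = false :=
  if_neg fun ⟨_, _, h⟩ => hs (h.of_isPrefix (List.prefix_append _ _))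

theorem gfun_inr_eq_true_iff {s : List (Fin m)} {i : Fin m} {y : ℕ → Fin m} {P : Q}
    (hs : PrefixF (s ++ [i]) y) : gfun m Q s (.inr (y, P)) = true ↔ i ∈ (P : Set (Fin m)) := by
  simp only [gfun, ite_eq_left_iff, Bool.false_eq_true, imp_false, not_not]
  constructor
  · rintro ⟨ξ, hξ, h⟩
    rwa [← hs.apply_length, h.apply_length]
  · exact fun hi => ⟨i, hi, hs⟩

section Convergence

variable {x : ℕ → Fin m} {s : ℕ → List (Fin m)}

theorem eventually_gfun_eq_false (hmeet : ∀ N, ∀ᶠ k in atTop, MeetLarge x (s k) N)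
    {z : XQ m Q} (hz : ∀ P, z ≠ .inr (x, P)) : ∀ᶠ k in atTop, gfun m Q (s k) z = false := by
  rcases z with t | ⟨y, P⟩
  · filter_upwards [hmeet (t.length + 1)] with k hk
    exact gfun_inl_eq_false fun hts => by have := hk.le_length; rw [← hts] at this; omega
  · obtain ⟨n, hn⟩ := Function.ne_iff.1 fun hyx : y = x => hz P (by rw [hyx])
    filter_upwards [hmeet (n + 1)] with k hk
    exact gfun_inr_eq_false_of_not_prefixF (hk.not_prefixF hn)

theorem tendsto_gfun (hmeet : ∀ N, ∀ᶠ k in atTop, MeetLarge x (s k) N) {f : XQ m Q → Bool}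
    (hoff : ∀ z, (∀ P, z ≠ .inr (x, P)) → f z = false)
    (hon : ∀ P k, gfun m Q (s k) (.inr (x, P)) = f (.inr (x, P))) :
    Tendsto (fun k => gfun m Q (s k)) atTop (𝓝 f) := by
  refine tendsto_pi_nhds.2 fun z => tendsto_nhds_of_eventually_eq ?_
  by_cases hz : ∃ P, z = .inr (x, P)
  · obtain ⟨P, rfl⟩ := hz
    exact Eventually.of_forall (hon P)
  · push Not at hz
    rw [hoff z hz]
    exact eventually_gfun_eq_false hmeet hz

end Convergence

theorem gind_eq_true_iff {x y : ℕ → Fin m} {P P' : Q} :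
    gind m Q x P (.inr (y, P')) = true ↔ y = x ∧ P' = P := by
  simp only [gind, ite_eq_left_iff, Bool.false_eq_true, imp_false, not_not]
  exact Sum.inr_injective.eq_iff.trans Prod.ext_iff

/-- Convergence in `K_∞(𝔔)` for a pairwise disjoint family `𝔔`: if `(s_k)` is an
`(i,j)`-sequence over `x ∈ m^ω`, then when `i = j ∈ P ∈ 𝔔` the functions `g_{s_k}`
converge pointwise to the indicator of `{(x,P)}`; and when `i ≠ j`, or `i = j` belongs to
no member of `𝔔`, they converge pointwise to the zero function. -/
theorem Kinf_convergence (m : ℕ) (Q : Set (Set (Fin m))) (hdisj : Q.Pairwise Disjoint)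
    (i j : Fin m) (x : ℕ → Fin m) (s : ℕ → List (Fin m))
    (hinc : ∀ k, IncFB x (s k) (i, j))
    (hmeet : ∀ N : ℕ, ∀ᶠ k in Filter.atTop, MeetLarge x (s k) N) :
    (∀ (P : Set (Fin m)) (hP : P ∈ Q), i = j → i ∈ P →
      Filter.Tendsto (fun k => gfun m Q (s k)) Filter.atTop (𝓝 (gind m Q x ⟨P, hP⟩))) ∧
    ((i ≠ j ∨ (i = j ∧ ∀ P ∈ Q, i ∉ P)) →
      Filter.Tendsto (fun k => gfun m Q (s k)) Filter.atTop (𝓝 (gzero m Q))) := by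
  constructor
  · rintro P hP rfl hiP
    refine tendsto_gfun hmeet (fun z hz => if_neg (hz _)) fun P' k => Bool.eq_iff_iff.2 ?_
    rw [gfun_inr_eq_true_iff (hinc k).prefixF_append, gind_eq_true_iff]
    exact ⟨fun hiP' => 
      ⟨rfl, Subtype.ext (Set.PairwiseDisjoint.elim_set hdisj P'.2 hP i hiP' hiP)⟩,
      fun ⟨_, hP'⟩ => hP' ▸ hiP⟩
  · refine fun hcase => tendsto_gfun hmeet (fun _ _ => rfl) fun P' k => ?_
    rcases hcase with hij | ⟨rfl, hnone⟩
    · exact gfun_inr_eq_false_of_not_prefixF ((hinc k).not_prefixF hij)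
    · exact Bool.eq_false_iff.2 fun h =>
        hnone P' P'.2 ((gfun_inr_eq_true_iff (hinc k).prefixF_append).1 h)
end

section
/- Every metrizable closed subspace of the split interval is countable. -/
open Filter Topology

/-- The split interval (double arrow space) `S = [0,1] × {0,1}` with the order topology
induced by the lexicographic order. -/
def DoubleArrow : Type := ↥(Set.Icc (0 : ℝ) 1) ×ₗ Bool

noncomputable instance : LinearOrder DoubleArrow :=
  inferInstanceAs (LinearOrder (↥(Set.Icc (0 : ℝ) 1) ×ₗ Bool))

noncomputable instance : TopologicalSpace DoubleArrow := Preorder.topology DoubleArrow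

/-!
The split interval is a complete linear order, hence compact, so a closed metrizable subspace `L`
is compact metrizable and therefore second countable. Each point `(t, 1)` is the least element of
the open set `((t, 0), →)`, and each `(t, 0)` the greatest element of `(←, (t, 1))`. In a second
countable partial order, a point that is the least element of one of its neighbourhoods is the least
element of some basic open set, which determines it; so only countably many points are of each kind.
-/

open Set

namespace Prod.Lex

variable {α β : Type*} [CompleteLattice α] [CompleteLattice β]

/-- When the supremum `a` of the first coordinates is not attained, the fibre over `a` is empty and
the second coordinate is `⊥`. -/
noncomputable instance : SupSet (α ×ₗ β) where
  sSup s :=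
    let a := sSup ((fun x ↦ (ofLex x).1) '' s)
    toLex (a, sSup {b | toLex (a, b) ∈ s})

theorem isLUB_sSup (s : Set (α ×ₗ β)) : IsLUB s (sSup s) := by
  obtain ⟨a, ha⟩ : ∃ a, sSup ((fun x ↦ (ofLex x).1) '' s) = a := ⟨_, rfl⟩
  have hsSup : sSup s = toLex (a, sSup {b | toLex (a, b) ∈ s}) := by rw [← ha]; rfl
  rw [hsSup]
  constructor
  · intro x hx
    have hxa : (ofLex x).1 ≤ a := ha ▸ le_sSup (mem_image_of_mem _ hx)
    rcases hxa.lt_or_eq with hlt | heq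
    · exact le_iff.2 (.inl hlt)
    · refine le_iff.2 (.inr ⟨heq, le_sSup ?_⟩)
      rwa [← heq]
  · intro u hu
    have hau : a ≤ (ofLex u).1 :=
      ha ▸ sSup_le (forall_mem_image.2 fun x hx ↦ monotone_fst _ _ (hu hx))
    rcases hau.lt_or_eq with hlt | heq
    · exact le_iff.2 (.inl hlt)
    · refine le_iff.2 (.inr ⟨heq, sSup_le fun b hb ↦ ?_⟩)
      have hbu : toLex (a, b) ≤ u := hu hb
      exact ((le_iff.1 hbu).resolve_left (heq ▸ lt_irrefl a)).2

noncomputable instance {α β : Type*} [CompleteLinearOrder α] [CompleteLinearOrder β] :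
    CompleteLinearOrder (α ×ₗ β) where
  __ := instLinearOrder α β
  __ := LinearOrder.toBiheytingAlgebra _
  sInf s := sSup (lowerBounds s)
  isLUB_sSup := isLUB_sSup
  isGLB_sInf _ := isLUB_lowerBounds.mp (isLUB_sSup _)

end Prod.Lex

theorem CovBy.Ici_mem_nhds {α : Type*} [LinearOrder α] [TopologicalSpace α]
    [ClosedIicTopology α] {a b : α} (h : a ⋖ b) : Ici b ∈ 𝓝 b :=
  h.Ioi_eq ▸ Ioi_mem_nhds h.lt

theorem CovBy.Iic_mem_nhds {α : Type*} [LinearOrder α] [TopologicalSpace α]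
    [ClosedIciTopology α] {a b : α} (h : a ⋖ b) : Iic a ∈ 𝓝 a :=
  h.Iio_eq ▸ Iio_mem_nhds h.lt

section SecondCountable

variable {X : Type*} [TopologicalSpace X] [SecondCountableTopology X] [PartialOrder X]

theorem countable_setOf_Ici_mem_nhds : {x : X | Ici x ∈ 𝓝 x}.Countable := by
  refine ((TopologicalSpace.countable_countableBasis X).biUnion fun V _ ↦
    Subsingleton.countable (s := {x | IsLeast V x}) fun x hx y hy ↦ hx.unique hy).mono
    fun x hx ↦ ?_
  obtain ⟨V, hV, hxV, hVx⟩ := (TopologicalSpace.isBasis_countableBasis X).mem_nhds_iff.1 hx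
  exact mem_iUnion₂.2 ⟨V, hV, hxV, hVx⟩

theorem countable_setOf_Iic_mem_nhds : {x : X | Iic x ∈ 𝓝 x}.Countable :=
  countable_setOf_Ici_mem_nhds (X := Xᵒᵈ)

theorem countable_of_forall_Ici_mem_nhds_or_Iic_mem_nhds
    (h : ∀ x : X, Ici x ∈ 𝓝 x ∨ Iic x ∈ 𝓝 x) : Countable X := by
  rw [← countable_univ_iff]
  exact (countable_setOf_Ici_mem_nhds.union countable_setOf_Iic_mem_nhds).mono fun x _ ↦ h x

end SecondCountable

namespace DoubleArrow

noncomputable instance : CompleteLinearOrder DoubleArrow :=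
  inferInstanceAs (CompleteLinearOrder (↥(Icc (0 : ℝ) 1) ×ₗ Bool))

instance : OrderTopology DoubleArrow := ⟨rfl⟩

theorem toLex_false_covBy_toLex_true (t : ↥(Icc (0 : ℝ) 1)) :
    CovBy (α := DoubleArrow) (toLex (t, false)) (toLex (t, true)) :=
  Prod.Lex.toLex_covBy_toLex_iff.2 <|
    .inl ⟨rfl, Bool.false_lt_true, fun c h₁ h₂ ↦ by cases c <;> simp_all⟩

theorem Ici_mem_nhds_or_Iic_mem_nhds (v : DoubleArrow) : Ici v ∈ 𝓝 v ∨ Iic v ∈ 𝓝 v := by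
  obtain ⟨t, _ | _⟩ := v
  · exact .inr (toLex_false_covBy_toLex_true t).Iic_mem_nhds
  · exact .inl (toLex_false_covBy_toLex_true t).Ici_mem_nhds

end DoubleArrow

/-- Every metrizable closed subspace of the split interval is countable. -/
theorem metrizable_closed_subspace_countable (L : Set DoubleArrow) (hL : IsClosed L)
    (hmet : TopologicalSpace.MetrizableSpace ↥L) : L.Countable := by
  have : CompactSpace L := isCompact_iff_compactSpace.mp hL.isCompact
  rw [← countable_coe_iff]
  exact countable_of_forall_Ici_mem_nhds_or_Iic_mem_nhds fun x ↦
    (DoubleArrow.Ici_mem_nhds_or_Iic_mem_nhds x).imp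
      continuous_subtype_val.continuousAt.preimage_mem_nhds
      continuous_subtype_val.continuousAt.preimage_mem_nhds
end

section
/- For every perfect (closed, nonempty, without isolated points) subset A of [0,1], the subspace A × {0,1} of the split interval S = [0,1] × {0,1} (lexicographic order topology) contains a homeomorphic copy of the split interval S' = S \ {(0,0),(1,1)}. -/
open Filter Topology

/-- The split interval `S' = S \ {(0,0), (1,1)}` (with the subspace topology, which is
its order topology). -/
abbrev SplitInterval : Type :=
  {p : DoubleArrow //
    p ≠ toLex (⟨(0 : ℝ), by norm_num⟩, false) ∧ p ≠ toLex (⟨(1 : ℝ), by norm_num⟩, true)}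

/-!
A perfect set `A` carries an atomless Borel probability measure `ν` with `ν Aᶜ = 0`: push the
Haar measure of the Cantor group `ℕ → ZMod 2` forward along an embedding of the Cantor space
into `A`. The distribution function `φ` of `ν` is then a continuous monotone surjection of
`[0,1]` onto itself that is constant on every gap of `A`. Sending `(t,0)` to
`(min φ⁻¹(t), 0)` and `(t,1)` to `(max φ⁻¹(t), 1)` is a strictly monotone continuous self-map
of the double arrow space, hence an embedding. On `S'` it takes values in `A × {0,1}`: an
endpoint of a fibre other than `0` or `1` that lay outside the closed set `A` would sit inside a
gap of `A`, on which `φ` is constant, so it would not be extremal in its fibre.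
-/

open Set MeasureTheory ProbabilityTheory

theorem StrictMono.isEmbedding_of_continuous {α β : Type*} [LinearOrder α] [TopologicalSpace α]
    [h : OrderTopology α] [LinearOrder β] [TopologicalSpace β] [OrderTopology β] {f : α → β}
    (hf : StrictMono f) (hc : Continuous f) : IsEmbedding f :=
  ⟨⟨le_antisymm (continuous_iff_le_induced.1 hc)
    ((induced_topology_le_preorder hf.lt_iff_lt).trans_eq h.1.symm)⟩, hf.injective⟩

theorem Monotone.map_bot_of_surjective {α β : Type*} [Preorder α] [OrderBot α] [PartialOrder β]
    [OrderBot β] {f : α → β} (hf : Monotone f) (hsurj : Function.Surjective f) : f ⊥ = ⊥ := by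
  obtain ⟨x, hx⟩ := hsurj ⊥
  exact le_bot_iff.1 (hx ▸ hf bot_le)

theorem Monotone.map_top_of_surjective {α β : Type*} [Preorder α] [OrderTop α] [PartialOrder β]
    [OrderTop β] {f : α → β} (hf : Monotone f) (hsurj : Function.Surjective f) : f ⊤ = ⊤ := by
  obtain ⟨x, hx⟩ := hsurj ⊤
  exact top_le_iff.1 (hx ▸ hf le_top)

namespace Prod.Lex

variable {α : Type*} [Preorder α] {x : α ×ₗ Bool} {a : α}

theorem fst_lt_of_lt_toLex_false (h : x < toLex (a, false)) : (ofLex x).1 < a := by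
  rcases lt_iff.1 h with h | ⟨-, h⟩
  · exact h
  · exact absurd h (by simp)

theorem lt_fst_of_toLex_true_lt (h : toLex (a, true) < x) : a < (ofLex x).1 := by
  rcases lt_iff.1 h with h | ⟨-, h⟩
  · exact h
  · exact absurd h (by simp)

theorem toLex_false_covBy_toLex_true : toLex (a, false) ⋖ toLex (a, true) :=
  toLex_covBy_toLex_iff.2 (Or.inl ⟨rfl, by decide⟩)

end Prod.Lex

section Fibers

variable {X Y : Type*} [CompleteLinearOrder X] {φ : X → Y}

def fiberMin (φ : X → Y) (t : Y) : X := sInf (φ ⁻¹' {t})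

def fiberMax (φ : X → Y) (t : Y) : X := sSup (φ ⁻¹' {t})

theorem fiberMin_le (x : X) : fiberMin φ (φ x) ≤ x := sInf_le rfl

theorem le_fiberMax (x : X) : x ≤ fiberMax φ (φ x) := le_sSup rfl

theorem fiberMin_le_fiberMax (hsurj : Function.Surjective φ) (t : Y) :
    fiberMin φ t ≤ fiberMax φ t := by
  obtain ⟨x, rfl⟩ := hsurj t
  exact (fiberMin_le x).trans (le_fiberMax x)

variable [TopologicalSpace X] [OrderTopology X] [TopologicalSpace Y] [T1Space Y]

theorem map_fiberMin (hφ : Continuous φ) (hsurj : Function.Surjective φ) (t : Y) :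
    φ (fiberMin φ t) = t :=
  ((isClosed_singleton.preimage hφ).sInf_mem (hsurj t)).out

theorem map_fiberMax (hφ : Continuous φ) (hsurj : Function.Surjective φ) (t : Y) :
    φ (fiberMax φ t) = t :=
  ((isClosed_singleton.preimage hφ).sSup_mem (hsurj t)).out

theorem fiberMin_mem {A : Set X} (hA : IsClosed A) (hφ : Continuous φ)
    (hsurj : Function.Surjective φ) (hgap : ∀ x y, x ≤ y → Ioo x y ⊆ Aᶜ → φ x = φ y)
    {t : Y} (ht : t ≠ φ ⊥) : fiberMin φ t ∈ A := by
  by_contra hA'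
  have hbot : ⊥ < fiberMin φ t :=
    bot_lt_iff_ne_bot.2 fun h => ht (by rw [← h, map_fiberMin hφ hsurj])
  obtain ⟨a, ha, hsub⟩ := exists_Ioc_subset_of_mem_nhds (hA.isOpen_compl.mem_nhds hA') ⟨⊥, hbot⟩
  have := hgap a _ ha.le (Ioo_subset_Ioc_self.trans hsub)
  rw [map_fiberMin hφ hsurj] at this
  exact ha.not_ge (this ▸ fiberMin_le a)

theorem fiberMax_mem {A : Set X} (hA : IsClosed A) (hφ : Continuous φ)
    (hsurj : Function.Surjective φ) (hgap : ∀ x y, x ≤ y → Ioo x y ⊆ Aᶜ → φ x = φ y)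
    {t : Y} (ht : t ≠ φ ⊤) : fiberMax φ t ∈ A := by
  by_contra hA'
  have htop : fiberMax φ t < ⊤ :=
    lt_top_iff_ne_top.2 fun h => ht (by rw [← h, map_fiberMax hφ hsurj])
  obtain ⟨a, ha, hsub⟩ := exists_Ico_subset_of_mem_nhds (hA.isOpen_compl.mem_nhds hA') ⟨⊤, htop⟩
  have := hgap _ a ha.le (Ioo_subset_Ico_self.trans hsub)
  rw [map_fiberMax hφ hsurj] at this
  exact ha.not_ge (this ▸ le_fiberMax a)

variable [PartialOrder Y]

theorem fiberMax_lt_fiberMin (hmono : Monotone φ) (hφ : Continuous φ)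
    (hsurj : Function.Surjective φ) {s t : Y} (hst : s < t) : fiberMax φ s < fiberMin φ t := by
  refine lt_of_not_ge fun h => hst.not_ge ?_
  simpa only [map_fiberMin hφ hsurj, map_fiberMax hφ hsurj] using hmono h

theorem exists_lt_fiberMax_of_lt_fiberMin [DenselyOrdered X] (hmono : Monotone φ)
    (hφ : Continuous φ) (hsurj : Function.Surjective φ) {r : X} {t : Y}
    (hr : r < fiberMin φ t) : ∃ s < t, r < fiberMax φ s := by
  obtain ⟨x, hrx, hxt⟩ := exists_between hr
  refine ⟨φ x, lt_of_le_of_ne ?_ fun h => ?_, hrx.trans_le (le_fiberMax x)⟩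
  · simpa only [map_fiberMin hφ hsurj] using hmono hxt.le
  · exact hxt.not_ge (h ▸ fiberMin_le x)

theorem exists_fiberMin_lt_of_fiberMax_lt [DenselyOrdered X] (hmono : Monotone φ)
    (hφ : Continuous φ) (hsurj : Function.Surjective φ) {r : X} {t : Y}
    (hr : fiberMax φ t < r) : ∃ s > t, fiberMin φ s < r := by
  obtain ⟨x, htx, hxr⟩ := exists_between hr
  refine ⟨φ x, lt_of_le_of_ne ?_ fun h => ?_, (fiberMin_le x).trans_lt hxr⟩
  · simpa only [map_fiberMax hφ hsurj] using hmono htx.le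
  · exact htx.not_ge (h ▸ le_fiberMax x)

end Fibers

theorem MeasureTheory.Measure.nullSingletonClass_of_infinite {G : Type*} [AddGroup G]
    [TopologicalSpace G] [ContinuousAdd G] [MeasurableSpace G] [BorelSpace G]
    [MeasurableSingletonClass G] [Infinite G] (μ : Measure G) [μ.IsAddHaarMeasure]
    [IsFiniteMeasure μ] : NullSingletonClass μ :=
  ⟨fun x => by_contra fun h => measure_ne_top μ univ <| Set.infinite_univ.meas_eq_top
    ⟨μ {x}, h, fun y _ => ((addHaar_singleton μ y).trans (addHaar_singleton μ x).symm).ge⟩⟩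

theorem Perfect.exists_isProbabilityMeasure_nullSingletonClass {α : Type*} [MetricSpace α]
    [CompleteSpace α] [MeasurableSpace α] [BorelSpace α] {A : Set α} (hA : Perfect A)
    (hne : A.Nonempty) :
    ∃ ν : Measure α, IsProbabilityMeasure ν ∧ NullSingletonClass ν ∧ ν Aᶜ = 0 := by
  obtain ⟨f, hfA, hf, hf_inj⟩ := hA.exists_nat_bool_injection hne
  let e : (ℕ → ZMod 2) → ℕ → Bool := fun σ n => finTwoEquiv (σ n)
  have he : Continuous e :=
    continuous_pi fun n => continuous_of_discreteTopology.comp (continuous_apply n)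
  have hfe : Measurable (f ∘ e) := (hf.comp he).measurable
  let μ : Measure (ℕ → ZMod 2) := Measure.addHaarMeasure ⊤
  have : IsProbabilityMeasure μ :=
    ⟨by rw [← TopologicalSpace.PositiveCompacts.coe_top]; exact Measure.addHaarMeasure_self⟩
  have := Measure.nullSingletonClass_of_infinite μ
  refine ⟨μ.map (f ∘ e), Measure.isProbabilityMeasure_map hfe.aemeasurable, ⟨fun x => ?_⟩, ?_⟩
  · rw [Measure.map_apply hfe (measurableSet_singleton x)]
    refine Set.Subsingleton.measure_zero (fun a ha b hb => ?_) μ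
    exact finTwoEquiv.injective.comp_left (hf_inj (ha.trans hb.symm))
  · rw [Measure.map_apply hfe hA.closed.measurableSet.compl, preimage_compl,
      preimage_comp, preimage_eq_univ_iff.2 hfA, preimage_univ, compl_univ, measure_empty]

theorem ProbabilityTheory.continuous_cdf (ν : Measure ℝ) [IsProbabilityMeasure ν]
    [NullSingletonClass ν] : Continuous (cdf ν) := by
  refine continuous_iff_continuousAt.2 fun x => ?_
  rw [(monotone_cdf ν).continuousAt_iff_leftLim_eq_rightLim, StieltjesFunction.rightLim_eq]
  have := (cdf ν).measure_singleton x
  rw [measure_cdf, measure_singleton, eq_comm, ENNReal.ofReal_eq_zero, sub_nonpos] at this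
  exact le_antisymm ((monotone_cdf ν).leftLim_le le_rfl) this

theorem ProbabilityTheory.cdf_eq_of_measure_Ioo_eq_zero {ν : Measure ℝ} [IsProbabilityMeasure ν]
    [NullSingletonClass ν] {x y : ℝ} (hxy : x ≤ y) (h : ν (Ioo x y) = 0) : cdf ν x = cdf ν y := by
  have h' := (cdf ν).measure_Ioc x y
  rw [measure_cdf, measure_congr Ioo_ae_eq_Ioc.symm, h, eq_comm, ENNReal.ofReal_eq_zero,
    sub_nonpos] at h'
  exact le_antisymm (monotone_cdf ν hxy) h'

theorem Perfect.exists_cantorFunction {A : Set ℝ} (hperf : Perfect A) (hne : A.Nonempty)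
    (hA : A ⊆ Icc 0 1) :
    ∃ φ : Icc (0 : ℝ) 1 → Icc (0 : ℝ) 1, Monotone φ ∧ Continuous φ ∧ Function.Surjective φ ∧
      ∀ x y, x ≤ y → Ioo x y ⊆ (Subtype.val ⁻¹' A)ᶜ → φ x = φ y := by
  obtain ⟨ν, _, _, hνA⟩ := hperf.exists_isProbabilityMeasure_nullSingletonClass hne
  have h₀ : cdf ν 0 = 0 := by
    have : ν (Iic 0) = 0 := by
      rw [← measure_congr Iio_ae_eq_Iic]
      exact measure_mono_null (t := Aᶜ) (fun x hx hxA => not_le.2 hx (hA hxA).1) hνA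
    simp [cdf_eq_real, Measure.real, this]
  have h₁ : cdf ν 1 = 1 := by
    have : ν (Iic 1) = 1 := (prob_compl_eq_zero_iff measurableSet_Iic).1 <|
      measure_mono_null (t := Aᶜ) (fun x hx hxA => hx (hA hxA).2) hνA
    simp [cdf_eq_real, Measure.real, this]
  refine ⟨fun x => ⟨cdf ν x, cdf_nonneg ν x, cdf_le_one ν x⟩, fun x y h => monotone_cdf ν h,
    ((continuous_cdf ν).comp continuous_subtype_val).subtype_mk _, fun t => ?_,
    fun x y hxy hgap => Subtype.ext (cdf_eq_of_measure_Ioo_eq_zero hxy ?_)⟩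
  · obtain ⟨x, hx, hxt⟩ := intermediate_value_Icc zero_le_one (continuous_cdf ν).continuousOn
      (show (t : ℝ) ∈ Icc (cdf ν 0) (cdf ν 1) by rw [h₀, h₁]; exact t.2)
    exact ⟨⟨x, hx⟩, Subtype.ext hxt⟩
  · exact measure_mono_null (t := Aᶜ) (fun z hz hzA => @hgap ⟨z, hA hzA⟩ hz hzA) hνA

namespace DoubleArrow

instance inst_s19 : OrderTopology DoubleArrow := ⟨rfl⟩

noncomputable def fiberEndpoint (φ : Icc (0 : ℝ) 1 → Icc (0 : ℝ) 1) (p : DoubleArrow) :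
    DoubleArrow :=
  toLex ((bif (ofLex p).2 then fiberMax φ else fiberMin φ) (ofLex p).1, (ofLex p).2)

variable {φ : Icc (0 : ℝ) 1 → Icc (0 : ℝ) 1}

theorem fiberMin_le_fst_fiberEndpoint (hsurj : Function.Surjective φ) (p : DoubleArrow) :
    fiberMin φ (ofLex p).1 ≤ (ofLex (fiberEndpoint φ p)).1 := by
  cases h : (ofLex p).2
  · simp [fiberEndpoint, h]
  · simpa [fiberEndpoint, h] using fiberMin_le_fiberMax hsurj _

theorem fst_fiberEndpoint_le_fiberMax (hsurj : Function.Surjective φ) (p : DoubleArrow) :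
    (ofLex (fiberEndpoint φ p)).1 ≤ fiberMax φ (ofLex p).1 := by
  cases h : (ofLex p).2
  · simpa [fiberEndpoint, h] using fiberMin_le_fiberMax hsurj _
  · simp [fiberEndpoint, h]

theorem strictMono_fiberEndpoint (hmono : Monotone φ) (hφ : Continuous φ)
    (hsurj : Function.Surjective φ) : StrictMono (fiberEndpoint φ) := by
  intro p q hpq
  rcases Prod.Lex.lt_iff.1 hpq with hlt | ⟨heq, hlt⟩
  · refine Prod.Lex.lt_iff.2 (Or.inl ?_)
    calc (ofLex (fiberEndpoint φ p)).1 ≤ fiberMax φ (ofLex p).1 :=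
          fst_fiberEndpoint_le_fiberMax hsurj p
      _ < fiberMin φ (ofLex q).1 := fiberMax_lt_fiberMin hmono hφ hsurj hlt
      _ ≤ (ofLex (fiberEndpoint φ q)).1 := fiberMin_le_fst_fiberEndpoint hsurj q
  · obtain ⟨hp, hq⟩ := Bool.lt_iff.1 hlt
    refine Prod.Lex.toLex_lt_toLex'.2 ⟨?_, fun _ => by simp [hp, hq]⟩
    simpa [hp, hq, heq] using fiberMin_le_fiberMax hsurj _

theorem eventually_lt_fiberEndpoint (hmono : Monotone φ) (hφ : Continuous φ)
    (hsurj : Function.Surjective φ) {p b : DoubleArrow} (hb : b < fiberEndpoint φ p) :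
    ∀ᶠ x in 𝓝 p, b < fiberEndpoint φ x := by
  obtain ⟨⟨t, c⟩, rfl⟩ := toLex.surjective p
  cases c
  · obtain ⟨s, hst, hs⟩ := exists_lt_fiberMax_of_lt_fiberMin hmono hφ hsurj
      (Prod.Lex.fst_lt_of_lt_toLex_false hb)
    have hlt : (toLex (s, true) : DoubleArrow) < toLex (t, false) :=
      Prod.Lex.toLex_lt_toLex.2 (Or.inl hst)
    filter_upwards [Ioi_mem_nhds hlt] with x hx
    refine Prod.Lex.lt_iff.2 (Or.inl ?_)
    calc (ofLex b).1 < fiberMax φ s := hs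
      _ < fiberMin φ (ofLex x).1 :=
        fiberMax_lt_fiberMin hmono hφ hsurj (Prod.Lex.lt_fst_of_toLex_true_lt hx)
      _ ≤ (ofLex (fiberEndpoint φ x)).1 := fiberMin_le_fst_fiberEndpoint hsurj x
  · have hcov : (toLex (t, false) : DoubleArrow) ⋖ toLex (t, true) :=
      Prod.Lex.toLex_false_covBy_toLex_true
    filter_upwards [Ioi_mem_nhds hcov.lt] with x hx
    exact hb.trans_le ((strictMono_fiberEndpoint hmono hφ hsurj).monotone (hcov.ge_of_gt hx))

theorem eventually_fiberEndpoint_lt (hmono : Monotone φ) (hφ : Continuous φ)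
    (hsurj : Function.Surjective φ) {p b : DoubleArrow} (hb : fiberEndpoint φ p < b) :
    ∀ᶠ x in 𝓝 p, fiberEndpoint φ x < b := by
  obtain ⟨⟨t, c⟩, rfl⟩ := toLex.surjective p
  cases c
  · have hcov : (toLex (t, false) : DoubleArrow) ⋖ toLex (t, true) :=
      Prod.Lex.toLex_false_covBy_toLex_true
    filter_upwards [Iio_mem_nhds hcov.lt] with x hx
    exact ((strictMono_fiberEndpoint hmono hφ hsurj).monotone (hcov.le_of_lt hx)).trans_lt hb
  · obtain ⟨s, hst, hs⟩ := exists_fiberMin_lt_of_fiberMax_lt hmono hφ hsurj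
      (Prod.Lex.lt_fst_of_toLex_true_lt hb)
    have hlt : (toLex (t, true) : DoubleArrow) < toLex (s, false) :=
      Prod.Lex.toLex_lt_toLex.2 (Or.inl hst)
    filter_upwards [Iio_mem_nhds hlt] with x hx
    refine Prod.Lex.lt_iff.2 (Or.inl ?_)
    calc (ofLex (fiberEndpoint φ x)).1 ≤ fiberMax φ (ofLex x).1 :=
          fst_fiberEndpoint_le_fiberMax hsurj x
      _ < fiberMin φ s :=
        fiberMax_lt_fiberMin hmono hφ hsurj (Prod.Lex.fst_lt_of_lt_toLex_false hx)
      _ < (ofLex b).1 := hs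

theorem continuous_fiberEndpoint (hmono : Monotone φ) (hφ : Continuous φ)
    (hsurj : Function.Surjective φ) : Continuous (fiberEndpoint φ) :=
  continuous_iff_continuousAt.2 fun _ => tendsto_order.2
    ⟨fun _ => eventually_lt_fiberEndpoint hmono hφ hsurj,
      fun _ => eventually_fiberEndpoint_lt hmono hφ hsurj⟩

theorem isEmbedding_fiberEndpoint (hmono : Monotone φ) (hφ : Continuous φ)
    (hsurj : Function.Surjective φ) : IsEmbedding (fiberEndpoint φ) :=
  (strictMono_fiberEndpoint hmono hφ hsurj).isEmbedding_of_continuous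
    (continuous_fiberEndpoint hmono hφ hsurj)

theorem fst_fiberEndpoint_mem {A : Set (Icc (0 : ℝ) 1)} (hA : IsClosed A) (hmono : Monotone φ)
    (hφ : Continuous φ) (hsurj : Function.Surjective φ)
    (hgap : ∀ x y, x ≤ y → Ioo x y ⊆ Aᶜ → φ x = φ y) {p : DoubleArrow}
    (hp₀ : p ≠ toLex (⊥, false)) (hp₁ : p ≠ toLex (⊤, true)) :
    (ofLex (fiberEndpoint φ p)).1 ∈ A := by
  obtain ⟨⟨t, c⟩, rfl⟩ := toLex.surjective p
  cases c
  · refine fiberMin_mem hA hφ hsurj hgap fun ht => hp₀ ?_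
    exact congrArg (fun s => toLex (s, false)) (ht.trans (hmono.map_bot_of_surjective hsurj))
  · refine fiberMax_mem hA hφ hsurj hgap fun ht => hp₁ ?_
    exact congrArg (fun s => toLex (s, true)) (ht.trans (hmono.map_top_of_surjective hsurj))

end DoubleArrow

/-- For every perfect (closed, nonempty, without isolated points) subset `A` of `[0,1]`,
the subspace `A × {0,1}` of the split interval contains a homeomorphic copy of the split
interval `S'`. -/
theorem perfect_split_contains_split_interval (A : Set ℝ) (hA : A ⊆ Set.Icc 0 1)
    (hperf : Perfect A) (hne : A.Nonempty) :
    ∃ L : Set DoubleArrow, L ⊆ {p : DoubleArrow | ((ofLex p).1 : ℝ) ∈ A} ∧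
      Nonempty (SplitInterval ≃ₜ ↥L) := by
  obtain ⟨φ, hmono, hφ, hsurj, hgap⟩ := hperf.exists_cantorFunction hne hA
  have hA' : IsClosed (Subtype.val ⁻¹' A : Set (Icc (0 : ℝ) 1)) :=
    hperf.closed.preimage continuous_subtype_val
  refine ⟨range (DoubleArrow.fiberEndpoint φ ∘ Subtype.val), ?_,
    ⟨((DoubleArrow.isEmbedding_fiberEndpoint hmono hφ hsurj).comp .subtypeVal).toHomeomorph⟩⟩
  rintro _ ⟨⟨p, hp₀, hp₁⟩, rfl⟩
  exact DoubleArrow.fst_fiberEndpoint_mem hA' hmono hφ hsurj hgap hp₀ hp₁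
end
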